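/- arXiv:math/0510572 — 9 statements merged into one kernel-verified Lean document; each statement's English description precedes it below -/
import Mathlib

section
/- Let N be a positive even integer. Define complex N×N matrices A and B, with indices n, m running over 1, …, N, by A_{n,m} = (i/2)·sign(n − m) and B_{n,m} = −2i·(−1)^{n+m}·sign(n − m). Then A·B = I, i.e. B is the inverse of A. -/
open Complex Matrix

noncomputable def sg (n m : ℕ) : ℂ := if m < n then 1 else if n < m then -1 else 0

lemma sg_self (n : ℕ) : sg n n = 0 := by simp [sg]

lemma geom_ico (a b : ℕ) (h : a ≤ b) :
    ∑ k ∈ Finset.Ico a b, ((-1:ℂ))^k = ((-1)^a - (-1)^b)/2 := by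
  induction b, h using Nat.le_induction with
  | base => simp
  | succ b hb ih =>
    rw [Finset.sum_Ico_succ_top (by omega), ih, pow_succ]
    ring

lemma split5 (f : ℕ → ℂ) (n m N : ℕ) (h1 : n < m) (h2 : m < N) :
    ∑ k ∈ Finset.range N, f k =
    (∑ k ∈ Finset.Ico 0 n, f k) + f n + (∑ k ∈ Finset.Ico (n+1) m, f k)
    + f m + (∑ k ∈ Finset.Ico (m+1) N, f k) := by
  rw [Finset.range_eq_Ico,
      ← Finset.sum_Ico_consecutive f (by omega : (0:ℕ) ≤ m+1) (by omega : m+1 ≤ N),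
      ← Finset.sum_Ico_consecutive f (by omega : (0:ℕ) ≤ m) (by omega : m ≤ m+1),
      ← Finset.sum_Ico_consecutive f (by omega : (0:ℕ) ≤ n+1) (by omega : n+1 ≤ m),
      ← Finset.sum_Ico_consecutive f (by omega : (0:ℕ) ≤ n) (by omega : n ≤ n+1)]
  rw [show Finset.Ico n (n+1) = {n} from Nat.Ico_succ_singleton n,
      show Finset.Ico m (m+1) = {m} from Nat.Ico_succ_singleton m]
  simp

lemma key (N n m : ℕ) (hN : Even N) (hn : n < N) (hm : m < N) :
    ∑ k ∈ Finset.range N, ((-1:ℂ))^(k+m) * sg n k * sg k m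
      = if n = m then 1 else 0 := by
  have hNpow : ((-1:ℂ))^N = 1 := hN.neg_one_pow
  rcases lt_trichotomy n m with h | h | h
  · rw [if_neg (by omega)]
    rw [split5 _ n m N h hm]
    have e1 : ∑ k ∈ Finset.Ico 0 n, ((-1:ℂ))^(k+m) * sg n k * sg k m
        = (-((-1:ℂ))^m) * ∑ k ∈ Finset.Ico 0 n, ((-1:ℂ))^k := by
      rw [Finset.mul_sum]
      apply Finset.sum_congr rfl
      intro k hk
      simp only [Finset.mem_Ico] at hk
      have h1 : k < n := hk.2
      have h2 : k < m := by omega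
      simp only [sg, if_pos h1, if_neg (show ¬ m < k by omega), if_pos h2, pow_add]
      ring
    have e2 : ∑ k ∈ Finset.Ico (n+1) m, ((-1:ℂ))^(k+m) * sg n k * sg k m
        = (((-1:ℂ))^m) * ∑ k ∈ Finset.Ico (n+1) m, ((-1:ℂ))^k := by
      rw [Finset.mul_sum]
      apply Finset.sum_congr rfl
      intro k hk
      simp only [Finset.mem_Ico] at hk
      have h1 : n < k := by omega
      have h2 : k < m := hk.2
      simp only [sg, if_neg (show ¬ k < n by omega), if_pos h1,
        if_neg (show ¬ m < k by omega), if_pos h2, pow_add]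
      ring
    have e3 : ∑ k ∈ Finset.Ico (m+1) N, ((-1:ℂ))^(k+m) * sg n k * sg k m
        = (-((-1:ℂ))^m) * ∑ k ∈ Finset.Ico (m+1) N, ((-1:ℂ))^k := by
      rw [Finset.mul_sum]
      apply Finset.sum_congr rfl
      intro k hk
      simp only [Finset.mem_Ico] at hk
      have h1 : n < k := by omega
      have h2 : m < k := by omega
      simp only [sg, if_neg (show ¬ k < n by omega), if_pos h1, if_pos h2, pow_add]
      ring
    rw [e1, e2, e3,
        geom_ico 0 n (by omega), geom_ico (n+1) m (by omega), geom_ico (m+1) N (by omega)]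
    simp only [sg_self, mul_zero, zero_mul, pow_succ, hNpow, pow_zero]
    ring
  · subst h
    rw [if_pos rfl]
    have e : ∀ k ∈ Finset.range N, ((-1:ℂ))^(k+n) * sg n k * sg k n
        = -((-1:ℂ))^(k+n) + (if k = n then ((-1:ℂ))^(k+n) else 0) := by
      intro k _
      rcases lt_trichotomy k n with h | h | h
      · rw [if_neg (show ¬ k = n by omega)]
        simp only [sg, if_pos h, if_neg (show ¬ n < k by omega)]
        ring
      · subst h
        simp [sg]
      · rw [if_neg (show ¬ k = n by omega)]
        simp only [sg, if_neg (show ¬ k < n by omega), if_pos h]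
        ring
    rw [Finset.sum_congr rfl e, Finset.sum_add_distrib, Finset.sum_ite_eq' _ n,
        if_pos (Finset.mem_range.mpr hn)]
    have hs : ∑ k ∈ Finset.range N, (-((-1:ℂ))^(k+n))
        = (-((-1:ℂ))^n) * ∑ k ∈ Finset.range N, ((-1:ℂ))^k := by
      rw [Finset.mul_sum]
      apply Finset.sum_congr rfl
      intro k _
      rw [pow_add]
      ring
    rw [hs, Finset.range_eq_Ico, geom_ico 0 N (by omega), hNpow]
    simp only [pow_add, pow_zero, sub_self, mul_zero, zero_mul, zero_add, mul_zero]
    norm_num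
    rw [← pow_add]
    exact Even.neg_one_pow ⟨n, rfl⟩
  · rw [if_neg (by omega)]
    rw [split5 _ m n N h hn]
    have e1 : ∑ k ∈ Finset.Ico 0 m, ((-1:ℂ))^(k+m) * sg n k * sg k m
        = (-((-1:ℂ))^m) * ∑ k ∈ Finset.Ico 0 m, ((-1:ℂ))^k := by
      rw [Finset.mul_sum]
      apply Finset.sum_congr rfl
      intro k hk
      simp only [Finset.mem_Ico] at hk
      have h1 : k < n := by omega
      have h2 : k < m := hk.2
      simp only [sg, if_pos h1, if_neg (show ¬ m < k by omega), if_pos h2, pow_add]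
      ring
    have e2 : ∑ k ∈ Finset.Ico (m+1) n, ((-1:ℂ))^(k+m) * sg n k * sg k m
        = (((-1:ℂ))^m) * ∑ k ∈ Finset.Ico (m+1) n, ((-1:ℂ))^k := by
      rw [Finset.mul_sum]
      apply Finset.sum_congr rfl
      intro k hk
      simp only [Finset.mem_Ico] at hk
      have h1 : k < n := hk.2
      have h2 : m < k := by omega
      simp only [sg, if_pos h1, if_pos h2, pow_add]
      ring
    have e3 : ∑ k ∈ Finset.Ico (n+1) N, ((-1:ℂ))^(k+m) * sg n k * sg k m
        = (-((-1:ℂ))^m) * ∑ k ∈ Finset.Ico (n+1) N, ((-1:ℂ))^k := by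
      rw [Finset.mul_sum]
      apply Finset.sum_congr rfl
      intro k hk
      simp only [Finset.mem_Ico] at hk
      have h1 : n < k := by omega
      have h2 : m < k := by omega
      simp only [sg, if_neg (show ¬ k < n by omega), if_pos h1, if_pos h2, pow_add]
      ring
    rw [e1, e2, e3,
        geom_ico 0 m (by omega), geom_ico (m+1) n (by omega), geom_ico (n+1) N (by omega)]
    simp only [sg_self, mul_zero, zero_mul, pow_succ, hNpow, pow_zero]
    ring

lemma sign_eq (n m : ℕ) :
    ((Real.sign (((n : ℕ) + 1 : ℝ) - ((m : ℕ) + 1 : ℝ)) : ℝ) : ℂ) = sg n m := by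
  rcases lt_trichotomy n m with h | h | h
  · have hx : ((n : ℝ) + 1) - ((m : ℝ) + 1) < 0 := by
      have : (n : ℝ) < (m : ℝ) := by exact_mod_cast h
      linarith
    rw [Real.sign_of_neg hx]
    simp [sg, h, show ¬ m < n by omega]
  · subst h
    simp [sg, Real.sign]
  · have hx : (0:ℝ) < ((n : ℝ) + 1) - ((m : ℝ) + 1) := by
      have : (m : ℝ) < (n : ℝ) := by exact_mod_cast h
      linarith
    rw [Real.sign_of_pos hx]
    simp [sg, h]

/-- For `N` a positive even integer, the lattice momentum matrix
`B_{n,m} = -2i (-1)^{n+m} sign(n-m)` is the inverse of the lattice inverse-momentum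
matrix `A_{n,m} = (i/2) sign(n-m)`, indices running over `1, …, N`. -/
theorem lattice_momentum_inverse
    (N : ℕ) (hN : 0 < N) (hNeven : Even N)
    (A B : Matrix (Fin N) (Fin N) ℂ)
    (hA : ∀ n m : Fin N,
      A n m = (Complex.I / 2) * (Real.sign (((n : ℕ) + 1 : ℝ) - ((m : ℕ) + 1 : ℝ)) : ℂ))
    (hB : ∀ n m : Fin N,
      B n m = (-2) * Complex.I * (-1 : ℂ) ^ (((n : ℕ) + 1) + ((m : ℕ) + 1)) *
        (Real.sign (((n : ℕ) + 1 : ℝ) - ((m : ℕ) + 1 : ℝ)) : ℂ)) :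
    A * B = 1 := by
  ext n m
  rw [Matrix.mul_apply, Matrix.one_apply]
  have hterm : ∀ k : Fin N, A n k * B k m
      = ((-1:ℂ))^((k:ℕ)+(m:ℕ)) * sg (n:ℕ) (k:ℕ) * sg (k:ℕ) (m:ℕ) := by
    intro k
    rw [hA, hB, sign_eq, sign_eq]
    have hpow : ((-1:ℂ)) ^ (((k:ℕ) + 1) + ((m:ℕ) + 1)) = ((-1:ℂ))^((k:ℕ)+(m:ℕ)) := by
      rw [show ((k:ℕ) + 1) + ((m:ℕ) + 1) = ((k:ℕ)+(m:ℕ)) + 2 by omega, pow_add]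
      norm_num
    rw [hpow]
    have hI : Complex.I * Complex.I = -1 := Complex.I_mul_I
    field_simp
    ring_nf
    rw [Complex.I_sq]
    ring
  rw [Finset.sum_congr rfl (fun k _ => hterm k)]
  rw [Fin.sum_univ_eq_sum_range (fun k => ((-1:ℂ))^(k+(m:ℕ)) * sg (n:ℕ) k * sg k (m:ℕ)) N]
  rw [key N n m hNeven n.isLt m.isLt]
  simp [Fin.val_eq_val]
end

section
/- Let N > 1 be real, let ε : [1, N] → ℝ be continuous with ε(n) > 0 for all n ∈ [1, N], let g, h ∈ ℝ with h ≠ 0, and let φ : [1, N] → ℂ be continuous and not identically zero. Suppose that for every n ∈ [1, N]: ε(n)·φ(n) = (1/2) ∫_{1}^{N} ( g + i·h·sign(n − m) ) φ(m) dm. Then (g + ih)/(g − ih) = exp( i h ∫_{1}^{N} dt / ε(t) ). -/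
/-!
Splitting the integral at `m = n`, the equation says `ε φ = ψ` on `[1, N]`, where
`ψ n = i h ∫₁ⁿ φ + (g - i h)/2 ∫₁ᴺ φ`. Then `ψ' = i h φ = (i h / ε) ψ`, so the linear ODE gives
`ψ N = ψ 1 · exp (i h ∫₁ᴺ dt/ε)`, while `ψ N = (g + i h)/2 ∫₁ᴺ φ` and `ψ 1 = (g - i h)/2 ∫₁ᴺ φ`.
Finally `ψ 1 ≠ 0`, for otherwise `ψ`, hence `φ`, would vanish on `[1, N]`.
-/

open Complex intervalIntegral MeasureTheory Set Topology

section Primitive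

variable {E : Type*} [NormedAddCommGroup E] [NormedSpace ℝ E] {f : ℝ → E} {a b : ℝ}

theorem ContinuousOn.continuousOn_primitive (hf : ContinuousOn f (Icc a b)) (hab : a ≤ b) :
    ContinuousOn (fun u => ∫ t in a..u, f t) (Icc a b) := by
  have := continuousOn_primitive_interval' (μ := volume) (hf.intervalIntegrable_of_Icc hab)
    left_mem_uIcc
  rwa [uIcc_of_le hab] at this

theorem ContinuousOn.integral_hasDerivWithinAt_Ici [CompleteSpace E] (hf : ContinuousOn f (Icc a b)) {x : ℝ}
    (hx : x ∈ Ico a b) : HasDerivWithinAt (fun u => ∫ t in a..u, f t) (f x) (Ici x) x := by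
  have hmem : Icc a b ∈ 𝓝[>] x := Icc_mem_nhdsGT_of_mem hx
  have hxI : x ∈ Icc a b := Ico_subset_Icc_self hx
  exact integral_hasDerivWithinAt_right
    (hf.mono (uIcc_subset_Icc (left_mem_Icc.2 (hx.1.trans hx.2.le)) hxI)).intervalIntegrable
    ⟨Icc a b, hmem, hf.aestronglyMeasurable measurableSet_Icc⟩
    ((hf x hxI).mono_of_mem_nhdsWithin hmem)

end Primitive

theorem eq_mul_cexp_integral_of_hasDerivWithinAt {ψ k : ℝ → ℂ} {a b : ℝ} (hab : a ≤ b)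
    (hψ : ContinuousOn ψ (Icc a b)) (hk : ContinuousOn k (Icc a b))
    (hderiv : ∀ x ∈ Ico a b, HasDerivWithinAt ψ (k x * ψ x) (Ici x) x) :
    ∀ x ∈ Icc a b, ψ x = ψ a * exp (∫ t in a..x, k t) := by
  set K : ℝ → ℂ := fun u => ∫ t in a..u, k t
  have hconst : ∀ x ∈ Icc a b, ψ x * exp (-K x) = ψ a * exp (-K a) := by
    refine constant_of_has_deriv_right_zero
      (hψ.mul (hk.continuousOn_primitive hab).neg.cexp) fun x hx => ?_
    refine ((hderiv x hx).mul (hk.integral_hasDerivWithinAt_Ici hx).neg.cexp).congr_deriv ?_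
    ring
  intro x hx
  have := hconst x hx
  simp only [K, integral_same, neg_zero, exp_zero, mul_one, exp_neg] at this
  rw [← this, inv_mul_cancel_right₀ (exp_ne_zero _)]

theorem integral_sign_kernel {φ : ℝ → ℂ} {a b n : ℝ} (α β : ℂ) (hn : n ∈ Icc a b)
    (hφ : IntervalIntegrable φ volume a b) :
    ∫ m in a..b, (α + β * (Real.sign (n - m) : ℂ)) * φ m =
      2 * β * (∫ m in a..n, φ m) + (α - β) * ∫ m in a..b, φ m := by
  have hφl : IntervalIntegrable φ volume a n :=
    hφ.mono_set (uIcc_subset_uIcc_left (uIcc_of_le (hn.1.trans hn.2) ▸ hn))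
  have hφr : IntervalIntegrable φ volume n b :=
    hφ.mono_set (uIcc_subset_uIcc_right (uIcc_of_le (hn.1.trans hn.2) ▸ hn))
  have hleft : EqOn (fun m => (α + β) * φ m)
      (fun m => (α + β * (Real.sign (n - m) : ℂ)) * φ m) (uIoo a n) := by
    intro m hm
    rw [uIoo_of_le hn.1] at hm
    simp only [Real.sign_of_pos (sub_pos.2 hm.2), ofReal_one, mul_one]
  have hright : EqOn (fun m => (α - β) * φ m)
      (fun m => (α + β * (Real.sign (n - m) : ℂ)) * φ m) (uIoo n b) := by
    intro m hm
    rw [uIoo_of_le hn.2] at hm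
    simp only [Real.sign_of_neg (sub_neg.2 hm.1), ofReal_neg, ofReal_one]
    ring
  rw [← integral_add_adjacent_intervals ((hφl.const_mul _).congr_uIoo hleft)
      ((hφr.const_mul _).congr_uIoo hright), ← integral_congr_uIoo hleft,
    ← integral_congr_uIoo hright, ← integral_add_adjacent_intervals hφl hφr]
  simp only [intervalIntegral.integral_const_mul]
  ring

theorem continuum_quantization_condition_general
    (N : ℝ) (hN : 1 < N)
    (ε : ℝ → ℝ) (hεcont : ContinuousOn ε (Set.Icc 1 N))
    (hεpos : ∀ n ∈ Set.Icc (1 : ℝ) N, 0 < ε n)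
    (g h : ℝ)
    (φ : ℝ → ℂ) (hφcont : ContinuousOn φ (Set.Icc 1 N))
    (hφne : ∃ n ∈ Set.Icc (1 : ℝ) N, φ n ≠ 0)
    (heq : ∀ n ∈ Set.Icc (1 : ℝ) N,
      (ε n : ℂ) * φ n =
        (1 / 2 : ℂ) * ∫ m in (1 : ℝ)..N,
          ((g : ℂ) + Complex.I * (h : ℂ) * (Real.sign (n - m) : ℂ)) * φ m) :
    ((g : ℂ) + Complex.I * h) / ((g : ℂ) - Complex.I * h) =
      Complex.exp (Complex.I * h * ((∫ t in (1 : ℝ)..N, 1 / ε t : ℝ) : ℂ)) := by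
  set F : ℝ → ℂ := fun n => ∫ m in (1 : ℝ)..n, φ m
  set ψ : ℝ → ℂ := fun n => I * h * F n + (g - I * h) / 2 * F N
  have hψ_eq : ∀ n ∈ Icc 1 N, (ε n : ℂ) * φ n = ψ n := fun n hn => by
    rw [heq n hn, integral_sign_kernel _ _ hn (hφcont.intervalIntegrable_of_Icc hN.le)]
    ring
  have hk : ContinuousOn (fun t => I * h * ((1 / ε t : ℝ) : ℂ)) (Icc 1 N) :=
    continuousOn_const.mul (continuous_ofReal.comp_continuousOn
      (continuousOn_const.div hεcont fun t ht => (hεpos t ht).ne'))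
  have hψ_exp := eq_mul_cexp_integral_of_hasDerivWithinAt (ψ := ψ) hN.le
    ((continuousOn_const.mul (hφcont.continuousOn_primitive hN.le)).add continuousOn_const) hk
    fun x hx => by
      refine (((hφcont.integral_hasDerivWithinAt_Ici hx).const_mul (I * h)).add_const
        _).congr_deriv ?_
      have hεx := ofReal_ne_zero.2 (hεpos x (Ico_subset_Icc_self hx)).ne'
      rw [← hψ_eq x (Ico_subset_Icc_self hx)]
      push_cast
      field_simp
  have hψ1 : ψ 1 ≠ 0 := fun hψ1 => by
    obtain ⟨n, hn, hφn⟩ := hφne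
    refine hφn ((mul_eq_zero.1 ?_).resolve_left (ofReal_ne_zero.2 (hεpos n hn).ne'))
    rw [hψ_eq n hn, hψ_exp n hn, hψ1, zero_mul]
  have hψ_one : ψ 1 = (g - I * h) / 2 * F N := by
    simp only [ψ, F, integral_same, mul_zero, zero_add]
  have hψ_N : ψ N = (g + I * h) / 2 * F N := by
    simp only [ψ]
    ring
  have hFN : F N ≠ 0 := (mul_ne_zero_iff.1 (hψ_one ▸ hψ1)).2
  have hψ_exp_N := hψ_exp N (right_mem_Icc.2 hN.le)
  rw [intervalIntegral.integral_const_mul, intervalIntegral.integral_ofReal] at hψ_exp_N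
  calc ((g : ℂ) + I * h) / (g - I * h) = ψ N / ψ 1 := by
        rw [hψ_N, hψ_one, mul_div_mul_right _ _ hFN, div_div_div_cancel_right₀ two_ne_zero]
    _ = _ := by rw [hψ_exp_N, mul_div_cancel_left₀ _ hψ1]

/-- Continuum quantization condition of the Russian doll / inverse Berry–Keating model:
a nontrivial continuous solution of the zero-energy integral equation forces
`(g+ih)/(g-ih) = exp(ih ∫₁^N dt/ε(t))`. -/
theorem continuum_quantization_condition
    (N : ℝ) (hN : 1 < N)
    (ε : ℝ → ℝ) (hεcont : ContinuousOn ε (Set.Icc 1 N))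
    (hεpos : ∀ n ∈ Set.Icc (1 : ℝ) N, 0 < ε n)
    (g h : ℝ) (hh : h ≠ 0)
    (φ : ℝ → ℂ) (hφcont : ContinuousOn φ (Set.Icc 1 N))
    (hφne : ∃ n ∈ Set.Icc (1 : ℝ) N, φ n ≠ 0)
    (heq : ∀ n ∈ Set.Icc (1 : ℝ) N,
      (ε n : ℂ) * φ n =
        (1 / 2 : ℂ) * ∫ m in (1 : ℝ)..N,
          ((g : ℂ) + Complex.I * (h : ℂ) * (Real.sign (n - m) : ℂ)) * φ m) :
    ((g : ℂ) + Complex.I * h) / ((g : ℂ) - Complex.I * h) =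
      Complex.exp (Complex.I * h * ((∫ t in (1 : ℝ)..N, 1 / ε t : ℝ) : ℂ)) :=
  continuum_quantization_condition_general N hN ε hεcont hεpos g h φ hφcont hφne heq
end

section
/- Let N ≥ 2 be an integer, let ε_1, …, ε_N, g, h be real numbers, and let φ ∈ ℂ^N satisfy, for every n ∈ {1,…,N}: ε_n·φ_n = (1/2) Σ_{m=1}^{N} ( g + i·h·sign(n − m) )·φ_m. Then for every n ∈ {1,…,N−1}: ( ε_{n+1} − i·h/2 )·φ_{n+1} = ( ε_n + i·h/2 )·φ_n. -/
open Complex Finset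

/-- Two-term recursion for the zero-energy states of the Russian doll Hamiltonian:
subtracting consecutive equations of `H_RD φ = 0` gives
`(ε_{n+1} − ih/2) φ_{n+1} = (ε_n + ih/2) φ_n`. -/
theorem russian_doll_recursion
    (N : ℕ) (hN : 2 ≤ N) (ε : ℕ → ℝ) (g h : ℝ) (φ : ℕ → ℂ)
    (heq : ∀ n ∈ Finset.Icc 1 N,
      (ε n : ℂ) * φ n = (1 / 2 : ℂ) * ∑ m ∈ Finset.Icc 1 N,
        ((g : ℂ) + Complex.I * (h : ℂ) * (Real.sign ((n : ℝ) - (m : ℝ)) : ℂ)) * φ m) :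
    ∀ n ∈ Finset.Icc 1 (N - 1),
      ((ε (n + 1) : ℂ) - Complex.I * (h : ℂ) / 2) * φ (n + 1) =
        ((ε n : ℂ) + Complex.I * (h : ℂ) / 2) * φ n := by
  intro n hn
  simp only [Finset.mem_Icc] at hn
  obtain ⟨hn1, hn2⟩ := hn
  have h1 := heq n (by simp only [Finset.mem_Icc]; omega)
  have h2 := heq (n + 1) (by simp only [Finset.mem_Icc]; omega)
  have key : (∑ m ∈ Finset.Icc 1 N,
        ((g : ℂ) + Complex.I * (h : ℂ) * (Real.sign (((n + 1 : ℕ) : ℝ) - (m : ℝ)) : ℂ)) * φ m)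
      - (∑ m ∈ Finset.Icc 1 N,
        ((g : ℂ) + Complex.I * (h : ℂ) * (Real.sign ((n : ℝ) - (m : ℝ)) : ℂ)) * φ m)
      = Complex.I * h * φ n + Complex.I * h * φ (n + 1) := by
    rw [← Finset.sum_sub_distrib]
    rw [Finset.sum_eq_add_of_mem n (n + 1)
      (by simp only [Finset.mem_Icc]; omega)
      (by simp only [Finset.mem_Icc]; omega)
      (by omega)
      (fun k _ hk => ?_)]
    · have e1 : Real.sign (((n + 1 : ℕ) : ℝ) - (n : ℝ)) = 1 := by
        apply Real.sign_of_pos; push_cast; linarith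
      have e2 : Real.sign ((n : ℝ) - (n : ℝ)) = 0 := by simp
      have e3 : Real.sign (((n + 1 : ℕ) : ℝ) - ((n + 1 : ℕ) : ℝ)) = 0 := by simp
      have e4 : Real.sign ((n : ℝ) - ((n + 1 : ℕ) : ℝ)) = -1 := by
        apply Real.sign_of_neg; push_cast; linarith
      rw [e1, e2, e3, e4]
      push_cast
      ring
    · obtain ⟨hk1, hk2⟩ := hk
      rcases lt_or_gt_of_ne hk1 with hlt | hgt
      · have s1 : Real.sign (((n + 1 : ℕ) : ℝ) - (k : ℝ)) = 1 := by
          apply Real.sign_of_pos; push_cast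
          have : (k : ℝ) < n := by exact_mod_cast hlt
          linarith
        have s2 : Real.sign ((n : ℝ) - (k : ℝ)) = 1 := by
          apply Real.sign_of_pos; push_cast
          have : (k : ℝ) < n := by exact_mod_cast hlt
          linarith
        rw [s1, s2]; ring
      · have hk2' : n + 2 ≤ k := by omega
        have hkr : (n : ℝ) + 2 ≤ (k : ℝ) := by exact_mod_cast hk2'
        have s1 : Real.sign (((n + 1 : ℕ) : ℝ) - (k : ℝ)) = -1 := by
          apply Real.sign_of_neg; push_cast; linarith
        have s2 : Real.sign ((n : ℝ) - (k : ℝ)) = -1 := by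
          apply Real.sign_of_neg; push_cast; linarith
        rw [s1, s2]; ring
  linear_combination h2 - h1 + (1 / 2 : ℂ) * key
end

section
/- Let N ≥ 1 be an integer, let ε_1, …, ε_N, g, h be real numbers with h ≠ 0. Then there exists a nonzero vector φ ∈ ℂ^N satisfying ε_n·φ_n = (1/2) Σ_{m=1}^{N} ( g + i·h·sign(n − m) )·φ_m for every n ∈ {1,…,N} if and only if (g + ih)/(g − ih) = Π_{n=1}^{N} ( ε_n + i·h/2 )/( ε_n − i·h/2 ). -/
/-!
Write `Sₖ = φ₁ + ⋯ + φₖ` for the partial sums of a candidate zero mode. Since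
`1 + sign(n - m)` equals `2`, `1`, `0` for `m < n`, `m = n`, `m > n`, the `n`-th equation becomes
the first-order affine recurrence `(εₙ - ih/2) Sₙ = (εₙ + ih/2) Sₙ₋₁ + c` with `S₀ = 0` and
`c = (g - ih) S_N / 2`. Its solution is `ih Sₖ = c (Pₖ - 1)`, where `Pₖ` is the product of the
Cayley ratios `(εₙ + ih/2)/(εₙ - ih/2)` over `n ≤ k`. At `k = N` this is self-consistent with
`S_N ≠ 0` (equivalently `φ ≠ 0`) exactly when `g + ih = (g - ih) P_N`; conversely, when that
holds, `Sₖ = Pₖ - 1` is a solution.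
-/

open Complex Finset

namespace RussianDoll

section AffineRecurrence

variable {K : Type*} [Field K] (e : ℕ → K) (a : K)

def cayleyProd (k : ℕ) : K :=
  ∏ n ∈ Icc 1 k, (e n + a) / (e n - a)

@[simp]
lemma cayleyProd_zero : cayleyProd e a 0 = 1 := by
  simp [cayleyProd]

variable {e a}

lemma sub_mul_cayleyProd_succ {k : ℕ} (he : e (k + 1) - a ≠ 0) :
    (e (k + 1) - a) * cayleyProd e a (k + 1) = (e (k + 1) + a) * cayleyProd e a k := by
  rw [cayleyProd, prod_Icc_succ_top (by omega), ← cayleyProd, mul_div_assoc', mul_comm,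
    div_mul_cancel₀ _ he, mul_comm]

lemma two_mul_eq_of_affine_recurrence (he : ∀ n, e n - a ≠ 0) {S : ℕ → K} {c : K} {N : ℕ}
    (h0 : S 0 = 0) (hrec : ∀ k < N, (e (k + 1) - a) * S (k + 1) = (e (k + 1) + a) * S k + c) :
    ∀ k ≤ N, 2 * a * S k = c * (cayleyProd e a k - 1) := by
  intro k hk
  induction k with
  | zero => simp [h0]
  | succ k ih =>
    refine mul_left_cancel₀ (he (k + 1)) ?_
    linear_combination 2 * a * hrec k hk + (e (k + 1) + a) * ih (by omega)
      - c * sub_mul_cayleyProd_succ (he (k + 1))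

lemma cayleyProd_sub_one_recurrence {k : ℕ} (he : e (k + 1) - a ≠ 0) :
    (e (k + 1) - a) * (cayleyProd e a (k + 1) - 1)
      = (e (k + 1) + a) * (cayleyProd e a k - 1) + 2 * a := by
  linear_combination sub_mul_cayleyProd_succ he

end AffineRecurrence

section PartialSums

variable {M : Type*} [AddCommGroup M]

def partialSum (φ : ℕ → M) (k : ℕ) : M :=
  ∑ m ∈ Icc 1 k, φ m

@[simp]
lemma partialSum_zero (φ : ℕ → M) : partialSum φ 0 = 0 := by
  simp [partialSum]

lemma partialSum_succ (φ : ℕ → M) (k : ℕ) :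
    partialSum φ (k + 1) = partialSum φ k + φ (k + 1) :=
  sum_Icc_succ_top (by omega) φ

lemma partialSum_sub_pred (S : ℕ → M) (k : ℕ) :
    partialSum (fun n ↦ S n - S (n - 1)) k = S k - S 0 := by
  induction k with
  | zero => simp
  | succ k ih => rw [partialSum_succ, ih, Nat.add_sub_cancel]; abel

lemma sum_filter_le_eq_partialSum (φ : ℕ → M) {k N : ℕ} (hk : k ≤ N) :
    ∑ m ∈ Icc 1 N, (if m ≤ k then φ m else 0) = partialSum φ k := by
  rw [← sum_filter, partialSum]
  congr 1
  ext m
  simp only [mem_filter, mem_Icc]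
  omega

end PartialSums

lemma forall_mem_Icc_one_iff {P : ℕ → Prop} {N : ℕ} :
    (∀ n ∈ Icc 1 N, P n) ↔ ∀ k < N, P (k + 1) := by
  refine ⟨fun h k hk ↦ h (k + 1) (mem_Icc.2 ⟨by omega, hk⟩), fun h n hn ↦ ?_⟩
  obtain ⟨hn1, hnN⟩ := mem_Icc.1 hn
  obtain ⟨k, rfl⟩ : ∃ k, n = k + 1 := ⟨n - 1, by omega⟩
  exact h k (by omega)

lemma sign_natCast_succ_sub (k m : ℕ) :
    (Real.sign (((k + 1 : ℕ) : ℝ) - m) : ℂ)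
      = (if m ≤ k then 1 else 0) + (if m ≤ k + 1 then 1 else 0) - 1 := by
  rcases lt_trichotomy m (k + 1) with hm | rfl | hm
  · have : (m : ℝ) < (k + 1 : ℕ) := by exact_mod_cast hm
    rw [Real.sign_of_pos (by linarith), if_pos (by omega), if_pos (by omega)]
    norm_num
  · simp
  · have : ((k + 1 : ℕ) : ℝ) < m := by exact_mod_cast hm
    rw [Real.sign_of_neg (by linarith), if_neg (by omega), if_neg (by omega)]
    norm_num

lemma sum_sign_mul_eq (α β : ℂ) (φ : ℕ → ℂ) {k N : ℕ} (hk : k < N) :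
    ∑ m ∈ Icc 1 N, (α + β * (Real.sign (((k + 1 : ℕ) : ℝ) - m) : ℂ)) * φ m
      = (α - β) * partialSum φ N + β * (partialSum φ k + partialSum φ (k + 1)) := by
  have hterm : ∀ m : ℕ, (α + β * (Real.sign (((k + 1 : ℕ) : ℝ) - m) : ℂ)) * φ m
      = (α - β) * φ m + β * ((if m ≤ k then φ m else 0) + (if m ≤ k + 1 then φ m else 0)) := by
    intro m
    rw [sign_natCast_succ_sub]
    split_ifs <;> ring
  simp only [hterm, sum_add_distrib, ← mul_sum, sum_filter_le_eq_partialSum φ hk.le,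
    sum_filter_le_eq_partialSum φ hk, partialSum]

lemma zeroMode_iff_recurrence (e : ℕ → ℂ) (α β : ℂ) (φ : ℕ → ℂ) (N : ℕ) :
    (∀ n ∈ Icc 1 N, e n * φ n
        = (1 / 2 : ℂ) * ∑ m ∈ Icc 1 N, (α + β * (Real.sign ((n : ℝ) - m) : ℂ)) * φ m) ↔
      ∀ k < N, (e (k + 1) - β / 2) * partialSum φ (k + 1)
        = (e (k + 1) + β / 2) * partialSum φ k + (α - β) * partialSum φ N / 2 := by
  rw [forall_mem_Icc_one_iff]
  refine forall₂_congr fun k hk ↦ ?_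
  rw [sum_sign_mul_eq α β φ hk, partialSum_succ]
  constructor <;> intro h <;> linear_combination h

variable {e : ℕ → ℂ} {α β : ℂ}

lemma eq_cayleyProd_of_recurrence (hβ : β ≠ 0) (hαβ : α - β ≠ 0) (he : ∀ n, e n - β / 2 ≠ 0)
    {φ : ℕ → ℂ} {N : ℕ} (hφ : ∃ n ∈ Icc 1 N, φ n ≠ 0)
    (hrec : ∀ k < N, (e (k + 1) - β / 2) * partialSum φ (k + 1)
      = (e (k + 1) + β / 2) * partialSum φ k + (α - β) * partialSum φ N / 2) :
    (α + β) / (α - β) = cayleyProd e (β / 2) N := by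
  have hsol := two_mul_eq_of_affine_recurrence he (partialSum_zero φ) hrec
  have hSN : partialSum φ N ≠ 0 := by
    intro h0
    have hS : ∀ k ≤ N, partialSum φ k = 0 := fun k hk ↦ by simpa [h0, hβ] using hsol k hk
    obtain ⟨n, hn, hφn⟩ := hφ
    refine hφn ((forall_mem_Icc_one_iff (P := (φ · = 0))).2 (fun k hk ↦ ?_) n hn)
    linear_combination hS (k + 1) hk - hS k hk.le - partialSum_succ φ k
  rw [div_eq_iff hαβ]
  refine mul_left_cancel₀ hSN ?_
  linear_combination 2 * hsol N le_rfl

lemma exists_recurrence_of_eq_cayleyProd (hβ : β ≠ 0) (hαβ : α - β ≠ 0)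
    (he : ∀ n, e n - β / 2 ≠ 0) {N : ℕ} (hq : (α + β) / (α - β) = cayleyProd e (β / 2) N) :
    ∃ φ : ℕ → ℂ, (∃ n ∈ Icc 1 N, φ n ≠ 0) ∧
      ∀ k < N, (e (k + 1) - β / 2) * partialSum φ (k + 1)
        = (e (k + 1) + β / 2) * partialSum φ k + (α - β) * partialSum φ N / 2 := by
  rw [div_eq_iff hαβ] at hq
  set P := cayleyProd e (β / 2) with hP
  have hS : ∀ k, partialSum (fun n ↦ P n - P (n - 1)) k = P k - 1 := fun k ↦ by
    rw [partialSum_sub_pred, hP, cayleyProd_zero]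
  refine ⟨fun n ↦ P n - P (n - 1), ?_, fun k _ ↦ ?_⟩
  · by_contra! h0
    have hPN : P N - 1 = 0 := by rw [← hS, partialSum, sum_eq_zero h0]
    exact hβ (by linear_combination (hq + (α - β) * hPN) / 2)
  · rw [hS, hS, hS]
    linear_combination cayleyProd_sub_one_recurrence (he (k + 1)) + hq / 2

end RussianDoll

theorem russian_doll_quantization_general
    (N : ℕ) (ε : ℕ → ℝ) (g h : ℝ) (hh : h ≠ 0) :
    (∃ φ : ℕ → ℂ, (∃ n ∈ Finset.Icc 1 N, φ n ≠ 0) ∧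
      ∀ n ∈ Finset.Icc 1 N,
        (ε n : ℂ) * φ n = (1 / 2 : ℂ) * ∑ m ∈ Finset.Icc 1 N,
          ((g : ℂ) + Complex.I * (h : ℂ) * (Real.sign ((n : ℝ) - (m : ℝ)) : ℂ)) * φ m) ↔
    ((g : ℂ) + Complex.I * h) / ((g : ℂ) - Complex.I * h) =
      ∏ n ∈ Finset.Icc 1 N,
        ((ε n : ℂ) + Complex.I * (h : ℂ) / 2) / ((ε n : ℂ) - Complex.I * (h : ℂ) / 2) := by
  have hβ : I * (h : ℂ) ≠ 0 := mul_ne_zero I_ne_zero (ofReal_ne_zero.2 hh)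
  have hαβ : (g : ℂ) - I * h ≠ 0 := fun h0 ↦ hh (by simpa using congrArg im h0)
  have he : ∀ n, (ε n : ℂ) - I * h / 2 ≠ 0 := fun n h0 ↦ hh (by simpa using congrArg im h0)
  have hzero := fun φ ↦ RussianDoll.zeroMode_iff_recurrence (fun n ↦ (ε n : ℂ)) g (I * h) φ N
  constructor
  · rintro ⟨φ, hφ, hsol⟩
    exact RussianDoll.eq_cayleyProd_of_recurrence hβ hαβ he hφ ((hzero φ).1 hsol)
  · intro hq
    obtain ⟨φ, hφ, hrec⟩ := RussianDoll.exists_recurrence_of_eq_cayleyProd hβ hαβ he hq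
    exact ⟨φ, hφ, (hzero φ).2 hrec⟩

/-- Exact (Bethe-ansatz) quantization condition of the Russian doll model: the zero-energy
Schrödinger equation `H_RD φ = 0` has a nonzero solution iff
`(g+ih)/(g−ih) = ∏ₙ (εₙ + ih/2)/(εₙ − ih/2)`. -/
theorem russian_doll_quantization
    (N : ℕ) (hN : 1 ≤ N) (ε : ℕ → ℝ) (g h : ℝ) (hh : h ≠ 0) :
    (∃ φ : ℕ → ℂ, (∃ n ∈ Finset.Icc 1 N, φ n ≠ 0) ∧
      ∀ n ∈ Finset.Icc 1 N,
        (ε n : ℂ) * φ n = (1 / 2 : ℂ) * ∑ m ∈ Finset.Icc 1 N,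
          ((g : ℂ) + Complex.I * (h : ℂ) * (Real.sign ((n : ℝ) - (m : ℝ)) : ℂ)) * φ m) ↔
    ((g : ℂ) + Complex.I * h) / ((g : ℂ) - Complex.I * h) =
      ∏ n ∈ Finset.Icc 1 N,
        ((ε n : ℂ) + Complex.I * (h : ℂ) / 2) / ((ε n : ℂ) - Complex.I * (h : ℂ) / 2) :=
  russian_doll_quantization_general N ε g h hh
end

section
/- Let N ≥ 1 be an integer, let f_1, …, f_N be nonzero real numbers, let g, h, E be real numbers with E ≠ 0, and let ψ ∈ ℂ^N satisfy, for every n: E·ψ_n = (1/2) Σ_{m=1}^{N} f_n·( g + i·h·sign(n − m) )·f_m·ψ_m. Then the vector φ defined by φ_n = f_n·ψ_n satisfies, for every n: (1/f_n²)·φ_n = (1/2) Σ_{m=1}^{N} ( g/E + i·(h/E)·sign(n − m) )·φ_m. -/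
open Complex Finset

/-- Exact map between the inverse Berry–Keating model and the Russian doll model:
an eigenstate `ψ` of `H_I` with eigenvalue `E ≠ 0` yields, via `φ_n = f_n ψ_n`, a
zero-energy state of the Russian doll model with levels `εₙ = 1/fₙ²`, `g_D = g/E`,
`h_D = h/E`. -/
theorem inverse_to_russian_doll_map
    (N : ℕ) (hN : 1 ≤ N) (f : ℕ → ℝ) (hf : ∀ n ∈ Finset.Icc 1 N, f n ≠ 0)
    (g h E : ℝ) (hE : E ≠ 0)
    (ψ φ : ℕ → ℂ) (hφ : ∀ n, φ n = (f n : ℂ) * ψ n)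
    (heq : ∀ n ∈ Finset.Icc 1 N,
      (E : ℂ) * ψ n = (1 / 2 : ℂ) * ∑ m ∈ Finset.Icc 1 N,
        (f n : ℂ) * ((g : ℂ) + Complex.I * (h : ℂ) * (Real.sign ((n : ℝ) - (m : ℝ)) : ℂ)) *
          (f m : ℂ) * ψ m) :
    ∀ n ∈ Finset.Icc 1 N,
      ((1 / (f n) ^ 2 : ℝ) : ℂ) * φ n = (1 / 2 : ℂ) * ∑ m ∈ Finset.Icc 1 N,
        (((g / E : ℝ) : ℂ) +
          Complex.I * ((h / E : ℝ) : ℂ) * (Real.sign ((n : ℝ) - (m : ℝ)) : ℂ)) * φ m := by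
  intro n hn
  have hfn : (f n : ℂ) ≠ 0 := by exact_mod_cast hf n hn
  have hEc : (E : ℂ) ≠ 0 := by exact_mod_cast hE
  have h1 := heq n hn
  have hψ : ψ n = (E : ℂ)⁻¹ * ((1 / 2 : ℂ) * ∑ m ∈ Finset.Icc 1 N,
      (f n : ℂ) * ((g : ℂ) + Complex.I * (h : ℂ) * (Real.sign ((n : ℝ) - (m : ℝ)) : ℂ)) *
        (f m : ℂ) * ψ m) := by
    field_simp at h1 ⊢
    linear_combination h1
  rw [hφ n, hψ]
  push_cast
  rw [Finset.mul_sum, Finset.mul_sum, Finset.mul_sum, Finset.mul_sum]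
  rw [Finset.mul_sum]
  apply Finset.sum_congr rfl
  intro m hm
  rw [hφ m]
  field_simp
end

section
/- Let N ≥ 1 be an integer, let f_1, …, f_N be nonzero real numbers, let g, h, E be real numbers with h ≠ 0 and E ≠ 0, and let H be the complex N×N matrix with entries H_{n,m} = (1/2)·f_n·( g + i·h·sign(n − m) )·f_m. Then E is an eigenvalue of H (i.e. there exists a nonzero ψ ∈ ℂ^N with H ψ = E ψ) if and only if (g + ih)/(g − ih) = Π_{n=1}^{N} ( 2E·f_n^{−2} + i·h )/( 2E·f_n^{−2} − i·h ). -/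
/-!
Write `φ_m = f_m ψ_m`, `S = ∑ φ`, `T_k = φ_0 + ⋯ + φ_{k-1}` and `u = i h`. Because
`sign (n - m) = [m < n] + [m ≤ n] - 1`, the `n`-th row of `H ψ = E ψ` only involves `S`, `T_n`
and `T_{n+1}`, and after multiplication by `2 / f_n` it reads
`a_n (T_{n+1} - T_n) = g S + u (T_n + T_{n+1} - S)` with `a_n = 2E / f_n²`.
For the shifted partial sums `U_k = T_k + (g - u) / (2u) · S` this is the first-order recursion
`U_{n+1} = U_n · (a_n + u) / (a_n - u)`, so `U_N = U_0 ∏ₙ (a_n + u) / (a_n - u)`, while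
`U_0 = (g - u) / (2u) · S` and `U_N = (g + u) / (2u) · S`. An eigenvector has `S ≠ 0` (otherwise
`U ≡ 0`, hence `φ = 0`), which gives the product identity. Conversely, if the identity holds,
taking for `U` the partial products of the factors and `φ_n = U_{n+1} - U_n` yields an
eigenvector, with `S = 2u / (g - u) ≠ 0`.
-/

open Complex Matrix Finset

namespace Fin

variable {M : Type*} {n : ℕ}

theorem partialSum_eq_sum_filter [AddCommMonoid M] (f : Fin n → M) (i : Fin (n + 1)) :
    partialSum f i = ∑ j : Fin n with j.val < i.val, f j :=
  List.sum_take_ofFn f i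

@[to_additive]
theorem partialProd_last [CommMonoid M] (f : Fin n → M) :
    partialProd f (last n) = ∏ i, f i := by
  rw [partialProd, val_last, List.take_of_length_le List.length_ofFn.le, List.prod_ofFn]

theorem eq_mul_partialProd [Monoid M] {U : Fin (n + 1) → M} {r : Fin n → M}
    (hU : ∀ j, U j.succ = U j.castSucc * r j) (i : Fin (n + 1)) :
    U i = U 0 * partialProd r i := by
  induction i using Fin.induction with
  | zero => simp
  | succ j ih => rw [hU, ih, partialProd_succ, mul_assoc]

theorem partialSum_succ_sub_castSucc [AddCommGroup M] (P : Fin (n + 1) → M) (i : Fin (n + 1)) :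
    partialSum (fun j => P j.succ - P j.castSucc) i = P i - P 0 := by
  induction i using Fin.induction with
  | zero => simp
  | succ j ih => rw [partialSum_succ, ih]; abel

end Fin

theorem Real.sign_natCast_sub_mul (a b : ℕ) (x : ℂ) :
    (Real.sign ((a : ℝ) - b) : ℂ) * x =
      (if b < a then x else 0) + (if b < a + 1 then x else 0) - x := by
  rcases lt_trichotomy b a with hba | rfl | hab
  · rw [Real.sign_of_pos (sub_pos.2 (Nat.cast_lt.2 hba))]
    simp [hba, hba.trans (Nat.lt_succ_self a)]
  · simp
  · rw [Real.sign_of_neg (sub_neg.2 (Nat.cast_lt.2 hab))]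
    simp [hab.not_gt, show ¬ b < a + 1 by omega]

theorem Fin.sum_sign_sub_mul {N : ℕ} (φ : Fin N → ℂ) (n : Fin N) :
    ∑ m : Fin N, (Real.sign (((n : ℕ) : ℝ) - (m : ℕ)) : ℂ) * φ m =
      partialSum φ n.castSucc + partialSum φ n.succ - ∑ m, φ m := by
  simp only [Real.sign_natCast_sub_mul, sum_add_distrib, sum_sub_distrib, ← sum_filter,
    partialSum_eq_sum_filter, val_castSucc, val_succ]

theorem Complex.ofReal_sub_I_mul_ne_zero (x : ℝ) {h : ℝ} (hh : h ≠ 0) :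
    (x : ℂ) - I * h ≠ 0 :=
  fun hx => hh (by simpa using congrArg Complex.im hx)

theorem Complex.two_mul_inv_sq_sub_I_mul_ne_zero (E x : ℝ) {h : ℝ} (hh : h ≠ 0) :
    2 * (E : ℂ) * ((x : ℂ) ^ 2)⁻¹ - I * h ≠ 0 := by
  have := ofReal_sub_I_mul_ne_zero (2 * E * (x ^ 2)⁻¹) hh
  push_cast at this
  exact this

noncomputable section

namespace InverseBerryKeating

variable {N : ℕ} (f : Fin N → ℝ) (g h E : ℝ)

def hamiltonian : Matrix (Fin N) (Fin N) ℂ :=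
  of fun n m => (1 / 2 : ℂ) * (f n : ℂ) *
    ((g : ℂ) + I * (h : ℂ) * (Real.sign (((n : ℕ) : ℝ) - ((m : ℕ) : ℝ)) : ℂ)) *
    (f m : ℂ)

def stepFactor (n : Fin N) : ℂ :=
  (2 * (E : ℂ) * ((f n : ℂ) ^ 2)⁻¹ + I * h) /
    (2 * (E : ℂ) * ((f n : ℂ) ^ 2)⁻¹ - I * h)

def shiftedPartialSum (ψ : Fin N → ℂ) (i : Fin (N + 1)) : ℂ :=
  Fin.partialSum (fun m => (f m : ℂ) * ψ m) i +
    (g - I * h) / (2 * I * h) * ∑ m, (f m : ℂ) * ψ m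

variable {f g h E}

theorem hamiltonian_mulVec_apply (ψ : Fin N → ℂ) (n : Fin N) :
    (hamiltonian f g h *ᵥ ψ) n = f n / 2 * (g * ∑ m, (f m : ℂ) * ψ m +
      I * h * (Fin.partialSum (fun m => (f m : ℂ) * ψ m) n.castSucc +
        Fin.partialSum (fun m => (f m : ℂ) * ψ m) n.succ - ∑ m, (f m : ℂ) * ψ m)) := by
  rw [← Fin.sum_sign_sub_mul, mulVec, dotProduct, mul_sum, mul_sum, ← sum_add_distrib, mul_sum]
  refine sum_congr rfl fun m _ => ?_
  simp only [hamiltonian, of_apply]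
  ring

theorem shiftedPartialSum_succ_sub_castSucc (ψ : Fin N → ℂ) (n : Fin N) :
    shiftedPartialSum f g h ψ n.succ - shiftedPartialSum f g h ψ n.castSucc =
      f n * ψ n := by
  simp only [shiftedPartialSum, Fin.partialSum_succ]
  ring

theorem shiftedPartialSum_zero (ψ : Fin N → ℂ) :
    shiftedPartialSum f g h ψ 0 = (g - I * h) / (2 * I * h) * ∑ m, (f m : ℂ) * ψ m := by
  simp [shiftedPartialSum]

theorem shiftedPartialSum_last (ψ : Fin N → ℂ) :
    shiftedPartialSum f g h ψ (Fin.last N) =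
      (1 + (g - I * h) / (2 * I * h)) * ∑ m, (f m : ℂ) * ψ m := by
  rw [shiftedPartialSum, Fin.partialSum_last]
  ring

theorem hamiltonian_mulVec_sub_apply (hh : h ≠ 0) (ψ : Fin N → ℂ) {n : Fin N}
    (hf : f n ≠ 0) :
    (hamiltonian f g h *ᵥ ψ) n - E * ψ n =
      -(f n / 2) * (2 * E * ((f n : ℂ) ^ 2)⁻¹ - I * h) *
      (shiftedPartialSum f g h ψ n.succ -
        shiftedPartialSum f g h ψ n.castSucc * stepFactor f h E n) := by
  have hfn : (f n : ℂ) ≠ 0 := ofReal_ne_zero.2 hf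
  have ha := two_mul_inv_sq_sub_I_mul_ne_zero E (f n) hh
  have hE : (f n : ℂ) / 2 * (2 * E * ((f n : ℂ) ^ 2)⁻¹) * f n = E := by field_simp
  have hc : 2 * I * h * ((g - I * h) / (2 * I * h)) = g - I * h :=
    mul_div_cancel₀ _ (by simp [hh])
  rw [hamiltonian_mulVec_apply, stepFactor, shiftedPartialSum, shiftedPartialSum,
    Fin.partialSum_succ]
  generalize 2 * (E : ℂ) * ((f n : ℂ) ^ 2)⁻¹ = a at ha hE ⊢
  generalize (g - I * h) / (2 * I * h) = c at hc ⊢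
  generalize Fin.partialSum (fun m => (f m : ℂ) * ψ m) n.castSucc = T
  generalize ∑ m, (f m : ℂ) * ψ m = S at hc ⊢
  have hr : (a - I * h) * ((T + c * S) * ((a + I * h) / (a - I * h))) =
      (T + c * S) * (a + I * h) := by
    field_simp
  linear_combination ψ n * hE - (f n / 2 * S) * hc - (f n / 2) * hr

theorem hamiltonian_mulVec_eq_smul_iff (hf : ∀ n, f n ≠ 0) (hh : h ≠ 0) (ψ : Fin N → ℂ) :
    hamiltonian f g h *ᵥ ψ = (E : ℂ) • ψ ↔ ∀ n,
      shiftedPartialSum f g h ψ n.succ =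
        shiftedPartialSum f g h ψ n.castSucc * stepFactor f h E n := by
  simp only [funext_iff, Pi.smul_apply, smul_eq_mul,
    ← sub_eq_zero (a := shiftedPartialSum f g h ψ _),
    ← sub_eq_zero (a := (hamiltonian f g h *ᵥ ψ) _),
    hamiltonian_mulVec_sub_apply hh ψ (hf _), mul_eq_zero, neg_eq_zero, div_eq_zero_iff,
    ofReal_eq_zero, hf, two_mul_inv_sq_sub_I_mul_ne_zero E _ hh, two_ne_zero, or_false, false_or]

theorem sum_ne_zero_of_shiftedPartialSum_succ (hf : ∀ n, f n ≠ 0) {r : Fin N → ℂ}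
    {ψ : Fin N → ℂ} (hψ : ψ ≠ 0)
    (hrec : ∀ n, shiftedPartialSum f g h ψ n.succ =
      shiftedPartialSum f g h ψ n.castSucc * r n) :
    ∑ m, (f m : ℂ) * ψ m ≠ 0 := by
  intro hS
  have hU : ∀ i, shiftedPartialSum f g h ψ i = 0 := fun i => by
    rw [Fin.eq_mul_partialProd hrec i, shiftedPartialSum_zero, hS, mul_zero, zero_mul]
  refine hψ (funext fun n => ?_)
  have hφ : shiftedPartialSum f g h ψ n.succ - shiftedPartialSum f g h ψ n.castSucc =
      f n * ψ n :=
    shiftedPartialSum_succ_sub_castSucc ψ n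
  rw [hU, hU, sub_zero, eq_comm, mul_eq_zero] at hφ
  exact hφ.resolve_left (ofReal_ne_zero.2 (hf n))

theorem prod_stepFactor_eq_of_mulVec_eq_smul (hf : ∀ n, f n ≠ 0) (hh : h ≠ 0)
    {ψ : Fin N → ℂ} (hψ : ψ ≠ 0) (hψE : hamiltonian f g h *ᵥ ψ = (E : ℂ) • ψ) :
    ((g : ℂ) + I * h) / ((g : ℂ) - I * h) = ∏ n, stepFactor f h E n := by
  have hrec := (hamiltonian_mulVec_eq_smul_iff hf hh ψ).1 hψE
  have hS := sum_ne_zero_of_shiftedPartialSum_succ hf hψ hrec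
  have hend := Fin.eq_mul_partialProd hrec (Fin.last N)
  rw [Fin.partialProd_last, shiftedPartialSum_zero, shiftedPartialSum_last] at hend
  have hh' : (h : ℂ) ≠ 0 := ofReal_ne_zero.2 hh
  have hg : (g : ℂ) - I * h ≠ 0 := ofReal_sub_I_mul_ne_zero g hh
  set c := ((g : ℂ) - I * h) / (2 * I * h) with hc_def
  have hc : c ≠ 0 := div_ne_zero hg (by simp [hh])
  have hfactor : 1 + c = c * ∏ n, stepFactor f h E n :=
    mul_right_cancel₀ hS (by rw [hend]; ring)
  calc ((g : ℂ) + I * h) / ((g : ℂ) - I * h) = (1 + c) / c := by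
        rw [hc_def]; field_simp; ring
    _ = ∏ n, stepFactor f h E n := by rw [hfactor, mul_div_cancel_left₀ _ hc]

theorem exists_mulVec_eq_smul_of_prod_stepFactor_eq (hf : ∀ n, f n ≠ 0) (hh : h ≠ 0)
    (hprod : ((g : ℂ) + I * h) / ((g : ℂ) - I * h) = ∏ n, stepFactor f h E n) :
    ∃ ψ : Fin N → ℂ, ψ ≠ 0 ∧ hamiltonian f g h *ᵥ ψ = (E : ℂ) • ψ := by
  set P := Fin.partialProd (stepFactor f h E)
  set ψ : Fin N → ℂ := fun n => (P n.succ - P n.castSucc) / f n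
  have hφ : (fun n => (f n : ℂ) * ψ n) = fun n => P n.succ - P n.castSucc :=
    funext fun n => mul_div_cancel₀ _ (ofReal_ne_zero.2 (hf n))
  have hP0 : P 0 = 1 := Fin.partialProd_zero _
  have hPlast : P (Fin.last N) = ∏ n, stepFactor f h E n := Fin.partialProd_last _
  have hU : shiftedPartialSum f g h ψ = P := by
    have hh' : (h : ℂ) ≠ 0 := ofReal_ne_zero.2 hh
    have hg : (g : ℂ) - I * h ≠ 0 := ofReal_sub_I_mul_ne_zero g hh
    have hS : ∑ n, (f n : ℂ) * ψ n = (g + I * h) / (g - I * h) - 1 := by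
      rw [← Fin.partialSum_last, hφ, Fin.partialSum_succ_sub_castSucc, hPlast, hprod, hP0]
    funext i
    rw [shiftedPartialSum, hS, hφ, Fin.partialSum_succ_sub_castSucc, hP0]
    field_simp
    ring
  refine ⟨ψ, fun hψ => ?_, (hamiltonian_mulVec_eq_smul_iff hf hh ψ).2 fun n => ?_⟩
  · have h0 := congrFun hU 0
    simp [hψ, shiftedPartialSum, P] at h0
  · rw [hU]
    exact Fin.partialProd_succ _ _

end InverseBerryKeating

end

open InverseBerryKeating in
theorem inverse_model_eigenvalue_condition_general
    (N : ℕ) (f : Fin N → ℝ) (hf : ∀ n, f n ≠ 0)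
    (g h E : ℝ) (hh : h ≠ 0)
    (H : Matrix (Fin N) (Fin N) ℂ)
    (hH : ∀ n m : Fin N,
      H n m = (1 / 2 : ℂ) * (f n : ℂ) *
        ((g : ℂ) + Complex.I * (h : ℂ) *
          (Real.sign ((((n : ℕ) : ℝ) + 1) - (((m : ℕ) : ℝ) + 1)) : ℂ)) * (f m : ℂ)) :
    (∃ ψ : Fin N → ℂ, ψ ≠ 0 ∧ H.mulVec ψ = (E : ℂ) • ψ) ↔
    ((g : ℂ) + Complex.I * h) / ((g : ℂ) - Complex.I * h) =
      ∏ n : Fin N,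
        (2 * (E : ℂ) * ((f n : ℂ) ^ 2)⁻¹ + Complex.I * h) /
          (2 * (E : ℂ) * ((f n : ℂ) ^ 2)⁻¹ - Complex.I * h) := by
  obtain rfl : H = hamiltonian f g h := Matrix.ext fun n m => by
    rw [hH, add_sub_add_right_eq_sub]
    rfl
  exact ⟨fun ⟨_, hψ, hψE⟩ => prod_stepFactor_eq_of_mulVec_eq_smul hf hh hψ hψE,
    exists_mulVec_eq_smul_of_prod_stepFactor_eq hf hh⟩

/-- Exact quantization condition for the nonzero eigenvalues of the inverse
Berry–Keating Hamiltonian `H_{n,m} = (1/2) f_n (g + i h sign(n−m)) f_m`. -/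
theorem inverse_model_eigenvalue_condition
    (N : ℕ) (hN : 1 ≤ N) (f : Fin N → ℝ) (hf : ∀ n, f n ≠ 0)
    (g h E : ℝ) (hh : h ≠ 0) (hE : E ≠ 0)
    (H : Matrix (Fin N) (Fin N) ℂ)
    (hH : ∀ n m : Fin N,
      H n m = (1 / 2 : ℂ) * (f n : ℂ) *
        ((g : ℂ) + Complex.I * (h : ℂ) *
          (Real.sign ((((n : ℕ) : ℝ) + 1) - (((m : ℕ) : ℝ) + 1)) : ℂ)) * (f m : ℂ)) :
    (∃ ψ : Fin N → ℂ, ψ ≠ 0 ∧ H.mulVec ψ = (E : ℂ) • ψ) ↔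
    ((g : ℂ) + Complex.I * h) / ((g : ℂ) - Complex.I * h) =
      ∏ n : Fin N,
        (2 * (E : ℂ) * ((f n : ℂ) ^ 2)⁻¹ + Complex.I * h) /
          (2 * (E : ℂ) * ((f n : ℂ) ^ 2)⁻¹ - Complex.I * h) :=
  inverse_model_eigenvalue_condition_general N f hf g h E hh H hH
end

section
/- Let N ≥ 1 be an integer and let A be the complex N×N matrix, with indices n, m running over 1, …, N, defined by A_{n,m} = (i/2)·sign(n − m). Then the set of eigenvalues of A is exactly { (1/2)·cot( π(k + 1/2)/N ) : k = 0, 1, …, N−1 }, and these N real numbers are pairwise distinct. -/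
open Complex Matrix Real

/-!
For `r ^ N = -1` the geometric vector `ψ m = r ^ m` is an eigenvector of the sign matrix
`sign (n - m)`: summing the two geometric series on either side of the diagonal gives the
eigenvalue `(r + 1) / (r - 1)`, which for `r = exp (2iθ)` equals `-i cot θ`. The `N` roots
`r = exp (2iθ_k)`, `θ_k = π (k + 1/2) / N`, thus give the eigenvalues `cot θ_k / 2` of `A`.
They are distinct because `cot` is strictly decreasing on `(0, π)`, and `N` distinct
eigenvalues of an `N × N` matrix exhaust its spectrum since their eigenvectors are linearly
independent.
-/

theorem Matrix.setOf_exists_mulVec_eq_smul_eq_range {K ι : Type*} [Field K] [Fintype ι]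
    [DecidableEq ι]
    (A : Matrix ι ι K) (μ : ι → K) (hμ : Function.Injective μ)
    (hv : ∀ i, ∃ v : ι → K, v ≠ 0 ∧ A *ᵥ v = μ i • v) :
    {z : K | ∃ v : ι → K, v ≠ 0 ∧ A *ᵥ v = z • v} = Set.range μ := by
  refine Set.Subset.antisymm (fun z ⟨w, hw0, hw⟩ => ?_) (Set.range_subset_iff.mpr hv)
  by_contra hz
  choose v hv0 hvμ using hv
  have hμz : Function.Injective (fun o : Option ι => o.elim z μ) := by
    rintro (_ | i) (_ | j) h
    exacts [rfl, (hz ⟨j, h.symm⟩).elim, (hz ⟨i, h⟩).elim, congrArg some (hμ h)]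
  have hind : LinearIndependent K (fun o : Option ι => o.elim w v) := by
    refine Module.End.eigenvectors_linearIndependent' (Matrix.toLin' A) _ hμz _ fun o => ?_
    rcases o with _ | i
    · exact Module.End.hasEigenvector_iff.mpr ⟨Module.End.mem_eigenspace_iff.mpr hw, hw0⟩
    · exact Module.End.hasEigenvector_iff.mpr
        ⟨Module.End.mem_eigenspace_iff.mpr (hvμ i), hv0 i⟩
  simpa using hind.fintype_card_le_finrank

theorem sub_one_mul_sum_intSign_mul_pow {R : Type*} [CommRing R] {r : R} {N n : ℕ} (hn : n < N)
    (hr : r ^ N = -1) :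
    (r - 1) * ∑ j ∈ Finset.range N, (Int.sign ((n : ℤ) - j) : R) * r ^ j
      = (r + 1) * r ^ n := by
  have below : ∑ j ∈ Finset.range n, (Int.sign ((n : ℤ) - j) : R) * r ^ j
      = ∑ j ∈ Finset.range n, r ^ j :=
    Finset.sum_congr rfl fun j hj => by
      rw [Int.sign_eq_one_of_pos (by simp at hj; omega), Int.cast_one, one_mul]
  have above : ∑ j ∈ Finset.Ico (n + 1) N, (Int.sign ((n : ℤ) - j) : R) * r ^ j
      = -∑ j ∈ Finset.Ico (n + 1) N, r ^ j := by
    rw [← Finset.sum_neg_distrib]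
    exact Finset.sum_congr rfl fun j hj => by
      rw [Int.sign_eq_neg_one_of_neg (by simp at hj; omega), Int.cast_neg, Int.cast_one,
        neg_one_mul]
  rw [← Finset.sum_range_add_sum_Ico _ hn, Finset.sum_range_succ, below, above, sub_self,
    Int.sign_zero, Int.cast_zero, zero_mul, add_zero, mul_add, mul_neg, mul_comm, geom_sum_mul,
    mul_comm, geom_sum_Ico_mul _ hn, hr, pow_succ]
  ring

theorem Real.sign_natCast_sub_natCast (n m : ℕ) :
    Real.sign ((n : ℝ) - m) = Int.sign ((n : ℤ) - m) := by
  rw [← Real.sign_intCast]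
  push_cast
  rfl

theorem Complex.cot_eq_I_mul_exp_ratio (z : ℂ) :
    Complex.cot z = I * ((exp (2 * I * z) + 1) / (exp (2 * I * z) - 1)) := by
  rw [Complex.cot_eq_exp_ratio, div_eq_mul_inv, div_eq_mul_inv, mul_inv, inv_I, ← neg_sub,
    inv_neg]
  ring

theorem Real.strictAntiOn_cot : StrictAntiOn Real.cot (Set.Ioo 0 π) := by
  intro x hx y hy hxy
  rw [← Real.tan_inv_eq_cot, ← Real.tan_inv_eq_cot, ← Real.tan_pi_div_two_sub,
    ← Real.tan_pi_div_two_sub]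
  exact Real.strictMonoOn_tan ⟨by linarith [hy.2], by linarith [hy.1]⟩
    ⟨by linarith [hx.2], by linarith [hx.1]⟩ (by linarith)

theorem intSign_mulVec_pow {K : Type*} [Field K] {N : ℕ} {r : K} (hr1 : r ≠ 1)
    (hr : r ^ N = -1) :
    (Matrix.of fun n m : Fin N => (Int.sign ((n : ℤ) - m) : K)) *ᵥ (fun m => r ^ (m : ℕ))
      = ((r + 1) / (r - 1)) • fun m : Fin N => r ^ (m : ℕ) := by
  ext n
  have hsum := sub_one_mul_sum_intSign_mul_pow n.isLt hr
  rw [← Fin.sum_univ_eq_sum_range (fun j => (Int.sign ((n : ℤ) - j) : K) * r ^ j)] at hsum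
  rw [Pi.smul_apply, smul_eq_mul, div_mul_eq_mul_div, eq_div_iff (sub_ne_zero.mpr hr1), ← hsum,
    mul_comm]
  rfl

theorem mem_Ioo_pi_mul_add_half_div {N k : ℕ} (hk : k < N) :
    π * (k + 1 / 2) / N ∈ Set.Ioo 0 π := by
  have hN : (0 : ℝ) < N := by exact_mod_cast (Nat.zero_le k).trans_lt hk
  have hkN : (k : ℝ) + 1 ≤ N := by exact_mod_cast hk
  refine ⟨by positivity, ?_⟩
  rw [div_lt_iff₀ hN]
  nlinarith [Real.pi_pos]

theorem exp_two_mul_I_pi_mul_add_half_div_pow {N : ℕ} (hN : N ≠ 0) (k : ℕ) :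
    exp (2 * I * (π * (k + 1 / 2) / N : ℝ)) ^ N = -1 := by
  rw [← Complex.exp_nat_mul]
  have : (N : ℂ) * (2 * I * (π * (k + 1 / 2) / N : ℝ)) = (2 * k + 1 : ℕ) * (π * I) := by
    push_cast
    field_simp
  rw [this, Complex.exp_nat_mul, Complex.exp_pi_mul_I, Odd.neg_one_pow ⟨k, rfl⟩]

theorem injective_cot_pi_mul_add_half_div (N : ℕ) :
    Function.Injective fun k : Fin N => Real.cot (π * ((k : ℕ) + 1 / 2) / N) := fun j k h => by
  have hN : (N : ℝ) ≠ 0 := by exact_mod_cast j.pos.ne'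
  have hθ := Real.strictAntiOn_cot.injOn (mem_Ioo_pi_mul_add_half_div j.isLt)
    (mem_Ioo_pi_mul_add_half_div k.isLt) h
  have hjk : ((j : ℕ) : ℝ) = k := by simpa [Real.pi_ne_zero, hN] using hθ
  exact Fin.ext (by exact_mod_cast hjk)

theorem lattice_inverse_momentum_spectrum_general
    (N : ℕ)
    (A : Matrix (Fin N) (Fin N) ℂ)
    (hA : ∀ n m : Fin N,
      A n m = (Complex.I / 2) *
        (Real.sign ((((n : ℕ) : ℝ) + 1) - (((m : ℕ) : ℝ) + 1)) : ℂ)) :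
    {z : ℂ | ∃ ψ : Fin N → ℂ, ψ ≠ 0 ∧ A.mulVec ψ = z • ψ} =
      Set.range (fun k : Fin N =>
        (((1 / 2 : ℝ) * Real.cot (Real.pi * (((k : ℕ) : ℝ) + 1 / 2) / (N : ℝ)) : ℝ) : ℂ)) ∧
    Function.Injective (fun k : Fin N =>
      (1 / 2 : ℝ) * Real.cot (Real.pi * (((k : ℕ) : ℝ) + 1 / 2) / (N : ℝ))) := by
  set θ : Fin N → ℝ := fun k => π * ((k : ℕ) + 1 / 2) / N
  have hinj : Function.Injective fun k => (1 / 2 : ℝ) * Real.cot (θ k) :=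
    (mul_right_injective₀ (one_div_ne_zero two_ne_zero)).comp
      (injective_cot_pi_mul_add_half_div N)
  have hA' : A = (I / 2) • Matrix.of fun n m : Fin N => (Int.sign ((n : ℤ) - m) : ℂ) := by
    ext n m
    rw [hA, add_sub_add_right_eq_sub, Real.sign_natCast_sub_natCast]
    simp
  refine ⟨Matrix.setOf_exists_mulVec_eq_smul_eq_range A _ (Complex.ofReal_injective.comp hinj)
    fun k => ?_, hinj⟩
  set r := exp (2 * I * θ k)
  have hrN : r ^ N = -1 := exp_two_mul_I_pi_mul_add_half_div_pow k.pos.ne' k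
  have hr1 : r ≠ 1 := fun h => by norm_num [h] at hrN
  have hcot : (((1 / 2 : ℝ) * Real.cot (θ k) : ℝ) : ℂ) = I / 2 * ((r + 1) / (r - 1)) := by
    rw [Complex.ofReal_mul, Complex.ofReal_cot, Complex.cot_eq_I_mul_exp_ratio]
    push_cast
    ring
  refine ⟨fun m => r ^ (m : ℕ),
    Function.ne_iff.mpr ⟨k, pow_ne_zero _ (Complex.exp_ne_zero _)⟩, ?_⟩
  change _ = (((1 / 2 : ℝ) * Real.cot (θ k) : ℝ) : ℂ) • _
  rw [hcot, hA', Matrix.smul_mulVec, intSign_mulVec_pow hr1 hrN, smul_smul]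

/-- The eigenvalues of the lattice inverse-momentum matrix `A_{n,m} = (i/2) sign(n−m)`
are exactly the `N` pairwise distinct real numbers `(1/2) cot(π(k+1/2)/N)`,
`k = 0, 1, …, N−1`. -/
theorem lattice_inverse_momentum_spectrum
    (N : ℕ) (hN : 1 ≤ N)
    (A : Matrix (Fin N) (Fin N) ℂ)
    (hA : ∀ n m : Fin N,
      A n m = (Complex.I / 2) *
        (Real.sign ((((n : ℕ) : ℝ) + 1) - (((m : ℕ) : ℝ) + 1)) : ℂ)) :
    {z : ℂ | ∃ ψ : Fin N → ℂ, ψ ≠ 0 ∧ A.mulVec ψ = z • ψ} =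
      Set.range (fun k : Fin N =>
        (((1 / 2 : ℝ) * Real.cot (Real.pi * (((k : ℕ) : ℝ) + 1 / 2) / (N : ℝ)) : ℝ) : ℂ)) ∧
    Function.Injective (fun k : Fin N =>
      (1 / 2 : ℝ) * Real.cot (Real.pi * (((k : ℕ) : ℝ) + 1 / 2) / (N : ℝ))) :=
  lattice_inverse_momentum_spectrum_general N A hA
end

section
/- Let a, c, E be real numbers and let u₁, u₂ ∈ ℂ satisfy u₁ + u₂ = a + i·E/2 and u₁·u₂ = c, and suppose that n + u₁ ≠ 0 and n + u₂ ≠ 0 for every positive integer n. Then the sequence N ↦ exp( −i·E·log N ) · Π_{n=1}^{N} ( n + a + c/n + i·E/2 )/( n + a + c/n − i·E/2 ) converges, as N → ∞, to Γ(1 + conj(u₁))·Γ(1 + conj(u₂)) / ( Γ(1 + u₁)·Γ(1 + u₂) ), where Γ denotes the complex Gamma function and conj denotes complex conjugation. -/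
open Complex Finset Filter Topology

/-!
Since `u₁, u₂` are the roots of `x² + (a + iE/2)x + c` and `ū₁, ū₂` those of the
conjugate polynomial, the `n`-th factor is `(n + u₁)(n + u₂) / ((n + ū₁)(n + ū₂))`,
while `exp(-iE log N) = N ^ (ū₁ + ū₂ - u₁ - u₂)`. The regularized product is therefore
a ratio of Gauss's approximants `N ^ u N! / ∏_{n=1}^N (n + u)`, each of which tends
to `Γ(1 + u)`.
-/

lemma prod_range_add_one_eq_prod_Icc {M : Type*} [CommMonoid M] (f : ℕ → M) (N : ℕ) :
    ∏ j ∈ range N, f (j + 1) = ∏ n ∈ Icc 1 N, f n := by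
  rw [range_eq_Ico, prod_Ico_add', zero_add, Ico_add_one_right_eq_Icc]

noncomputable def GammaOneAddSeq (u : ℂ) (N : ℕ) : ℂ :=
  (N : ℂ) ^ u * N.factorial / ∏ n ∈ Icc 1 N, ((n : ℂ) + u)

lemma mul_GammaSeq_eq_GammaOneAddSeq {u : ℂ} (hu : u ≠ 0) (N : ℕ) :
    u * GammaSeq u N = GammaOneAddSeq u N := by
  rw [GammaSeq, GammaOneAddSeq, prod_range_succ', ← prod_range_add_one_eq_prod_Icc,
    Nat.cast_zero, add_zero, mul_comm _ u, ← div_div, mul_div_assoc', mul_div_cancel₀ _ hu]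
  simp only [add_comm u]

lemma GammaOneAddSeq_zero : GammaOneAddSeq 0 = 1 := by
  funext N
  rw [GammaOneAddSeq, cpow_zero, one_mul, Pi.one_apply, ← prod_range_add_one_eq_prod_Icc]
  simp only [add_zero, ← Nat.cast_prod, prod_range_add_one_eq_factorial]
  exact div_self (Nat.cast_ne_zero.mpr N.factorial_ne_zero)

lemma tendsto_GammaOneAddSeq (u : ℂ) :
    Tendsto (GammaOneAddSeq u) atTop (𝓝 (Gamma (1 + u))) := by
  rcases eq_or_ne u 0 with rfl | hu
  · rw [GammaOneAddSeq_zero, add_zero, Gamma_one]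
    exact tendsto_const_nhds
  · rw [add_comm, Gamma_add_one u hu]
    exact ((GammaSeq_tendsto_Gamma u).const_mul u).congr (mul_GammaSeq_eq_GammaOneAddSeq hu)

lemma Gamma_one_add_ne_zero {u : ℂ} (hu : ∀ n : ℕ, 0 < n → (n : ℂ) + u ≠ 0) :
    Gamma (1 + u) ≠ 0 :=
  Gamma_ne_zero fun m hm => hu (m + 1) m.succ_pos (by push_cast; linear_combination hm)

lemma add_add_div_eq_mul_div {K : Type*} [Field K] {x : K} (hx : x ≠ 0) (u₁ u₂ : K) :
    x + (u₁ + u₂) + u₁ * u₂ / x = (x + u₁) * (x + u₂) / x := by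
  field_simp
  ring

lemma div_GammaOneAddSeq_eq_cpow_mul_prod (u₁ u₂ v₁ v₂ : ℂ) {N : ℕ} (hN : N ≠ 0) :
    GammaOneAddSeq v₁ N * GammaOneAddSeq v₂ N /
        (GammaOneAddSeq u₁ N * GammaOneAddSeq u₂ N) =
      (N : ℂ) ^ (v₁ + v₂ - (u₁ + u₂)) *
        ∏ n ∈ Icc 1 N,
        (((n : ℂ) + u₁) * ((n : ℂ) + u₂) / (((n : ℂ) + v₁) * ((n : ℂ) + v₂))) := by
  have hN' : (N : ℂ) ≠ 0 := Nat.cast_ne_zero.mpr hN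
  have hF : (N.factorial : ℂ) ≠ 0 := Nat.cast_ne_zero.mpr N.factorial_ne_zero
  simp only [GammaOneAddSeq, prod_div_distrib, prod_mul_distrib, cpow_sub _ _ hN',
    cpow_add _ _ hN']
  field_simp

/-- Gamma-function evaluation of the regularized product over the modified levels
`εₙ = n + a + c/n`, whose factors factorize through the roots `u₁, u₂` of
`x² + (a + iE/2)x + c`. -/
theorem modified_levels_gamma_limit
    (a c E : ℝ) (u₁ u₂ : ℂ)
    (hsum : u₁ + u₂ = (a : ℂ) + Complex.I * (E : ℂ) / 2)
    (hprod : u₁ * u₂ = (c : ℂ))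
    (hne : ∀ n : ℕ, 0 < n → (n : ℂ) + u₁ ≠ 0 ∧ (n : ℂ) + u₂ ≠ 0) :
    Tendsto (fun N : ℕ =>
        Complex.exp (-Complex.I * (E : ℂ) * (Real.log (N : ℝ) : ℂ)) *
          ∏ n ∈ Finset.Icc 1 N,
            (((n : ℂ) + (a : ℂ) + (c : ℂ) / (n : ℂ) + Complex.I * (E : ℂ) / 2) /
              ((n : ℂ) + (a : ℂ) + (c : ℂ) / (n : ℂ) - Complex.I * (E : ℂ) / 2)))
      atTop
      (nhds ((Complex.Gamma (1 + (starRingEnd ℂ) u₁) * Complex.Gamma (1 + (starRingEnd ℂ) u₂)) /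
        (Complex.Gamma (1 + u₁) * Complex.Gamma (1 + u₂)))) := by
  set v₁ := (starRingEnd ℂ) u₁
  set v₂ := (starRingEnd ℂ) u₂
  have hvsum : v₁ + v₂ = (a : ℂ) - Complex.I * (E : ℂ) / 2 := by
    rw [← map_add, hsum]
    simp only [map_add, map_mul, map_div₀, conj_ofReal, conj_I, map_ofNat]
    ring
  have hvprod : v₁ * v₂ = (c : ℂ) := by simpa using congrArg (starRingEnd ℂ) hprod
  have hΓ := mul_ne_zero (Gamma_one_add_ne_zero fun n hn => (hne n hn).1)
    (Gamma_one_add_ne_zero fun n hn => (hne n hn).2)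
  refine (((tendsto_GammaOneAddSeq v₁).mul (tendsto_GammaOneAddSeq v₂)).div
    ((tendsto_GammaOneAddSeq u₁).mul (tendsto_GammaOneAddSeq u₂)) hΓ).congr' ?_
  filter_upwards [eventually_ne_atTop 0] with N hN
  rw [Pi.div_apply, div_GammaOneAddSeq_eq_cpow_mul_prod _ _ _ _ hN]
  congr 1
  · rw [hvsum, hsum, cpow_def_of_ne_zero (Nat.cast_ne_zero.mpr hN), ← natCast_log]
    ring_nf
  · refine prod_congr rfl fun n hn => ?_
    have hn' : (n : ℂ) ≠ 0 := Nat.cast_ne_zero.mpr (Nat.one_le_iff_ne_zero.mp (mem_Icc.mp hn).1)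
    rw [← div_div_div_cancel_right₀ hn', ← add_add_div_eq_mul_div hn',
      ← add_add_div_eq_mul_div hn', hsum, hprod, hvsum, hvprod]
    ring
end

section
/- Let N > 1 and h be real numbers, let g : [1, N] → ℝ be continuously differentiable, ε : [1, N] → ℝ arbitrary, and φ : [1, N] → ℂ continuous. Suppose that for every n ∈ [1, N]: ε(n)·φ(n) = (1/2)·g(n)·∫_{1}^{n} φ(m) dm + (1/2)·∫_{n}^{N} g(m)·φ(m) dm + (i·h/2)·∫_{1}^{N} sign(n − m)·φ(m) dm. Then the function n ↦ ε(n)·φ(n) is differentiable on (1, N) and its derivative at n equals i·h·φ(n) + (1/2)·g′(n)·∫_{1}^{n} φ(m) dm. -/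
open Complex intervalIntegral MeasureTheory Set

/-! Since `sign (n - m)` is `1` for `m < n` and `-1` for `m > n`, the sign integral equals
`∫₁ⁿ φ - ∫ₙᴺ φ`. After this rewriting every term of the right-hand side is a product of a
differentiable function with an integral whose variable endpoint is `n`, so the fundamental
theorem of calculus applies. The boundary terms `± (1/2) g(n) φ(n)` produced by the first two
integrals cancel, and the two boundary terms of the sign integral add up to `i h φ(n)`. -/

section

variable {E : Type*} [NormedAddCommGroup E] [NormedSpace ℝ E] {f : ℝ → E} {a b : ℝ}

theorem integral_sign_sub_smul {x : ℝ} (hax : a ≤ x) (hxb : x ≤ b)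
    (hf : IntervalIntegrable f volume a b) :
    ∫ m in a..b, Real.sign (x - m) • f m = (∫ m in a..x, f m) - ∫ m in x..b, f m := by
  have below : EqOn (fun m => Real.sign (x - m) • f m) f (Ioo a x) := fun m hm => by
    simp [Real.sign_of_pos (sub_pos.2 hm.2)]
  have above : EqOn (fun m => Real.sign (x - m) • f m) (-f) (Ioo x b) := fun m hm => by
    simp [Real.sign_of_neg (sub_neg.2 hm.1)]
  have hx : x ∈ uIcc a b := mem_uIcc_of_le hax hxb
  have hfax : IntervalIntegrable f volume a x := hf.mono_set (uIcc_subset_uIcc_left hx)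
  have hfxb : IntervalIntegrable f volume x b := hf.mono_set (uIcc_subset_uIcc_right hx)
  rw [← integral_add_adjacent_intervals
      (hfax.congr_uIoo (uIoo_of_le hax ▸ below.symm))
      (hfxb.neg.congr_uIoo (uIoo_of_le hxb ▸ above.symm)),
    integral_congr_Ioo_of_le hax below, integral_congr_Ioo_of_le hxb above, Pi.neg_def,
    intervalIntegral.integral_neg, sub_eq_add_neg]

variable [CompleteSpace E] {n : ℝ}

theorem ContinuousOn.integral_hasDerivAt_right (hf : ContinuousOn f (Icc a b))
    (hn : n ∈ Ioo a b) : HasDerivAt (fun x => ∫ m in a..x, f m) (f n) n :=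
  intervalIntegral.integral_hasDerivAt_right
    ((hf.mono (Icc_subset_Icc le_rfl hn.2.le)).intervalIntegrable_of_Icc hn.1.le)
    ((hf.mono Ioo_subset_Icc_self).stronglyMeasurableAtFilter isOpen_Ioo n hn)
    (hf.continuousAt (Icc_mem_nhds hn.1 hn.2))

theorem ContinuousOn.integral_hasDerivAt_left (hf : ContinuousOn f (Icc a b))
    (hn : n ∈ Ioo a b) : HasDerivAt (fun x => ∫ m in x..b, f m) (-f n) n :=
  intervalIntegral.integral_hasDerivAt_left
    ((hf.mono (Icc_subset_Icc hn.1.le le_rfl)).intervalIntegrable_of_Icc hn.2.le)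
    ((hf.mono Ioo_subset_Icc_self).stronglyMeasurableAtFilter isOpen_Ioo n hn)
    (hf.continuousAt (Icc_mem_nhds hn.1 hn.2))

end

theorem RDplus_integrodifferential_general
    (N : ℝ) (h : ℝ)
    (g g' : ℝ → ℝ)
    (hg : ∀ n ∈ Set.Icc (1 : ℝ) N, HasDerivAt g (g' n) n)
    (ε : ℝ → ℝ)
    (φ : ℝ → ℂ) (hφ : ContinuousOn φ (Set.Icc 1 N))
    (heq : ∀ n ∈ Set.Icc (1 : ℝ) N,
      (ε n : ℂ) * φ n =
        (1 / 2 : ℂ) * (g n : ℂ) * (∫ m in (1 : ℝ)..n, φ m) +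
        (1 / 2 : ℂ) * (∫ m in n..N, (g m : ℂ) * φ m) +
        (Complex.I * (h : ℂ) / 2) * (∫ m in (1 : ℝ)..N, (Real.sign (n - m) : ℂ) * φ m)) :
    ∀ n ∈ Set.Ioo (1 : ℝ) N,
      HasDerivAt (fun x : ℝ => (ε x : ℂ) * φ x)
        (Complex.I * (h : ℂ) * φ n + (1 / 2 : ℂ) * (g' n : ℂ) * (∫ m in (1 : ℝ)..n, φ m))
        n := by
  intro n hn
  have hgφ : ContinuousOn (fun m => (g m : ℂ) * φ m) (Icc 1 N) :=
    (continuous_ofReal.comp_continuousOn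
      fun x hx => (hg x hx).continuousAt.continuousWithinAt).mul hφ
  have hF := hφ.integral_hasDerivAt_right hn
  have hrhs := ((((hg n (Ioo_subset_Icc_self hn)).ofReal_comp.mul hF).const_mul (1 / 2 : ℂ)).add
    ((hgφ.integral_hasDerivAt_left hn).const_mul (1 / 2 : ℂ))).add
    ((hF.sub (hφ.integral_hasDerivAt_left hn)).const_mul (I * h / 2))
  refine (hrhs.congr_deriv (by ring)).congr_of_eventuallyEq ?_
  filter_upwards [Ioo_mem_nhds hn.1 hn.2] with x hx
  have hsign := integral_sign_sub_smul hx.1.le hx.2.le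
    (hφ.intervalIntegrable_of_Icc (hx.1.trans hx.2).le)
  simp only [Complex.real_smul] at hsign
  rw [heq x (Ioo_subset_Icc_self hx), hsign]
  simp only [Pi.add_apply, Pi.mul_apply, Pi.sub_apply]
  ring

/-- Continuum limit of the zero-energy Schrödinger equation of the `RD₊` model:
the integral equation implies that `n ↦ ε(n)φ(n)` is differentiable on `(1,N)` with
derivative `ihφ(n) + (1/2) g'(n) ∫₁ⁿ φ`. -/
theorem RDplus_integrodifferential
    (N : ℝ) (hN : 1 < N) (h : ℝ)
    (g g' : ℝ → ℝ)
    (hg : ∀ n ∈ Set.Icc (1 : ℝ) N, HasDerivAt g (g' n) n)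
    (hg' : ContinuousOn g' (Set.Icc 1 N))
    (ε : ℝ → ℝ)
    (φ : ℝ → ℂ) (hφ : ContinuousOn φ (Set.Icc 1 N))
    (heq : ∀ n ∈ Set.Icc (1 : ℝ) N,
      (ε n : ℂ) * φ n =
        (1 / 2 : ℂ) * (g n : ℂ) * (∫ m in (1 : ℝ)..n, φ m) +
        (1 / 2 : ℂ) * (∫ m in n..N, (g m : ℂ) * φ m) +
        (Complex.I * (h : ℂ) / 2) * (∫ m in (1 : ℝ)..N, (Real.sign (n - m) : ℂ) * φ m)) :
    ∀ n ∈ Set.Ioo (1 : ℝ) N,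
      HasDerivAt (fun x : ℝ => (ε x : ℂ) * φ x)
        (Complex.I * (h : ℂ) * φ n + (1 / 2 : ℂ) * (g' n : ℂ) * (∫ m in (1 : ℝ)..n, φ m))
        n :=
  RDplus_integrodifferential_general N h g g' hg ε φ hφ heq
end
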